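/- arXiv:1510.09055 — 4 statements merged into one kernel-verified Lean document; each statement's English description precedes it below -/
import Mathlib

section
/- Let G be a finite group acting on a product C×C of a smooth projective curve C with a minimal mixed action, with index-two subgroup G⁰ = G ∩ Aut(C)², and fix τ' ∈ G \ G⁰ with τ = τ'² and φ(h) = τ'hτ'⁻¹. For g ∈ G \ G⁰, writing g = τ'h, the element g has a fixed point on C×C if and only if g² = φ(h)τh has a fixed point on C. -/
/-- Lemma (fix ii): for a minimal mixed action of `G` on `C × C`, with `G⁰` of index two,
`τ' ∈ G \ G⁰`, `τ = τ'²` and `φ(h) = τ'hτ'⁻¹`, a mixed element `g = τ'h` acts by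
`(x,y) ↦ (φ(h)y, τh x)`; it has a fixed point on `C × C` iff `g² = φ(h)τh` has a
fixed point on `C`. -/
theorem stmt_0 {C G : Type*} [Group G] (G0 : Subgroup G)
    (hind : G0.index = 2) (ρ : G0 →* Equiv.Perm C)
    (hρ : Function.Injective ρ)
    (τ' : G) (hτ' : τ' ∉ G0) (τ0 : G0) (hτ0 : (τ0 : G) = τ' * τ')
    (φ : G0 →* G0) (hφ : ∀ h : G0, ((φ h : G0) : G) = τ' * (h : G) * τ'⁻¹)
    (h : G0) :
    (∃ p : C × C, ρ (φ h) p.2 = p.1 ∧ ρ (τ0 * h) p.1 = p.2) ↔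
      ∃ x : C, ρ (φ h * τ0 * h) x = x := by
  constructor
  · rintro ⟨p, h1, h2⟩
    refine ⟨p.1, ?_⟩
    simp only [map_mul, Equiv.Perm.mul_apply] at h2 ⊢
    rw [h2, h1]
  · rintro ⟨x, hx⟩
    exact ⟨(x, ρ (τ0 * h) x), by simpa only [map_mul, Equiv.Perm.mul_apply] using hx, rfl⟩
end

section
/- Let X = (C×C)/G be a semi-isogenous mixed surface (G⁰ acts freely on C×C) and let O₂ = {g ∈ G \ G⁰ : g² = 1}. Then the ramification locus of the quotient map η : C×C → X is the disjoint union of the fixed-point curves R_g = Fix(g) over g ∈ O₂; in particular, distinct g, h ∈ O₂ have R_g ∩ R_h = ∅. -/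
/-- For a semi-isogenous mixed surface `X = (C×C)/G` (i.e. the index-two subgroup `G⁰`
acts freely on `C × C`), the ramification locus of `η : C×C → X` is the disjoint union
of the fixed loci `R_g = Fix g` for `g ∈ O₂ = {g ∈ G \ G⁰ : g² = 1}`: every point with
nontrivial stabilizer lies on some `R_g` with `g ∈ O₂`, and distinct `g, h ∈ O₂` have
`R_g ∩ R_h = ∅`. -/
theorem stmt_2 {C G : Type*} [Group G] [MulAction G (C × C)]
    (G0 : Subgroup G) (hind : G0.index = 2)
    (hfree : ∀ g ∈ G0, g ≠ 1 → ∀ p : C × C, g • p ≠ p) :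
    (∀ p : C × C, (∃ g : G, g ≠ 1 ∧ g • p = p) →
        ∃ g : G, (g ∉ G0 ∧ g ^ 2 = 1) ∧ g • p = p) ∧
      ∀ g h : G, g ∉ G0 → g ^ 2 = 1 → h ∉ G0 → h ^ 2 = 1 → g ≠ h →
        {p : C × C | g • p = p} ∩ {p : C × C | h • p = p} = ∅ := by
  constructor
  · rintro p ⟨g, hg1, hgp⟩
    have hgn : g ∉ G0 := fun hmem => hfree g hmem hg1 p hgp
    refine ⟨g, ⟨hgn, ?_⟩, hgp⟩
    by_contra hsq
    exact hfree (g ^ 2) (Subgroup.sq_mem_of_index_two hind g) hsq p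
      (by rw [pow_two, mul_smul, hgp, hgp])
  · intro g h hg hg2 hh hh2 hgh
    ext p
    simp only [Set.mem_inter_iff, Set.mem_setOf_eq, Set.mem_empty_iff_false, iff_false,
      not_and]
    intro hgp hhp
    have hmem : g⁻¹ * h ∈ G0 := by
      rw [Subgroup.mul_mem_iff_of_index_two hind]
      simp [hg, hh, G0.inv_mem_iff]
    have hne : g⁻¹ * h ≠ 1 := fun h1 => hgh (by
      have := congrArg (g * ·) h1
      simpa [mul_assoc] using this.symm)
    exact hfree _ hmem hne p (by rw [mul_smul, hhp, inv_smul_eq_iff, hgp])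
end

section
/- Let X = (C×C)/G be a semi-isogenous mixed surface. Then 8χ(O_X) − K²_X = δ(B) = (g(C)−1)|O₂|/|G⁰|. In particular K²_X ≤ 8χ(O_X), with equality if and only if O₂ is empty, i.e. the G-action on C×C is free. -/
/-- For a semi-isogenous mixed surface: `8χ(O_X) - K²_X = δ(B) = (g(C)-1)|O₂|/|G⁰|`,
so `K²_X ≤ 8χ(O_X)`, with equality iff `O₂ = ∅` (i.e. the `G`-action is free). Here
`|G| = 2|G⁰|`, `χ = (g-1)(g-1-|O₂|)/|G|` and `K² = (2(g-1)/|G|)(4(g-1)-5|O₂|)`. -/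
theorem stmt_8 (gC nG0 nO2 : ℕ) (hgC : 2 ≤ gC) (hnG0 : 0 < nG0)
    (chi K2 δ : ℚ)
    (hchi : chi = ((gC : ℚ) - 1) * (((gC : ℚ) - 1) - (nO2 : ℚ)) / (2 * (nG0 : ℚ)))
    (hK2 : K2 = 2 * ((gC : ℚ) - 1) / (2 * (nG0 : ℚ)) *
      (4 * ((gC : ℚ) - 1) - 5 * (nO2 : ℚ)))
    (hδ : δ = ((gC : ℚ) - 1) * (nO2 : ℚ) / (nG0 : ℚ)) :
    8 * chi - K2 = δ ∧ K2 ≤ 8 * chi ∧ (K2 = 8 * chi ↔ nO2 = 0) := by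
  have hn0 : (nG0 : ℚ) ≠ 0 := by exact_mod_cast hnG0.ne'
  have hg1 : (0 : ℚ) < (gC : ℚ) - 1 := by
    have : (2 : ℚ) ≤ (gC : ℚ) := by exact_mod_cast hgC
    linarith
  have key : 8 * chi - K2 = δ := by
    subst hchi hK2 hδ; field_simp; ring
  have hδnn : 0 ≤ δ := by
    rw [hδ]
    positivity
  refine ⟨key, by linarith, ?_⟩
  constructor
  · intro h
    have hδ0 : δ = 0 := by linarith
    rw [hδ] at hδ0
    have := (div_eq_zero_iff.mp hδ0).resolve_right hn0
    have := (mul_eq_zero.mp this).resolve_left hg1.ne'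
    exact_mod_cast this
  · intro h
    subst h
    have : δ = 0 := by rw [hδ]; simp
    linarith
end

section
/- Let k² ∈ {6,7,8}, and suppose real numbers satisfy: K² = k², K·B = 6(8−k²), B² = −4(8−k²), and there exists a class E with E² = −1, K·E = −1, E·B = n where n ≥ 6. Then the 3×3 Gram matrix M₁ of (K, B, E) has negative determinant: det M₁ = −k²n² − 12(8−k²)n + 4(8−k²)(73−8k²) < 0 for all n ≥ 6. Consequently, by the Hodge index theorem, a semi-isogenous mixed surface of general type with χ(O_X)=1 and K²_X ∈ {6,7,8} contains no (−1)-curve and is minimal. -/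
/-- For `K² ∈ {6,7,8}` (and `χ = 1`), the Gram matrix `M₁` of `(K_X, B, E)` for a
`(-1)`-curve `E` with `E·B = n ≥ 6` — with `K·B = 6(8-K²)`, `B² = -4(8-K²)`,
`K·E = E² = -1` — has determinant
`-K²n² - 12(8-K²)n + 4(8-K²)(73-8K²)`, which is negative for all `n ≥ 6`; by the
Hodge index theorem no such `(-1)`-curve exists, hence `X` is minimal. -/
theorem stmt_16 (k2 n : ℚ) (hk : k2 = 6 ∨ k2 = 7 ∨ k2 = 8) (hn : 6 ≤ n) :
    Matrix.det !![k2, 6 * (8 - k2), -1; 6 * (8 - k2), -4 * (8 - k2), n; -1, n, -1] =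
        -k2 * n ^ 2 - 12 * (8 - k2) * n + 4 * (8 - k2) * (73 - 8 * k2) ∧
      Matrix.det !![k2, 6 * (8 - k2), -1; 6 * (8 - k2), -4 * (8 - k2), n; -1, n, -1]
        < 0 := by
  rw [Matrix.det_fin_three]
  constructor
  · simp [Matrix.cons_val_zero, Matrix.cons_val_one]; ring
  · rcases hk with h | h | h <;> subst h <;> simp <;> nlinarith [sq_nonneg n, sq_nonneg (n - 6)]
end
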